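/- arXiv:cs/0609141 — 2 statements merged into one kernel-verified Lean document; each statement's English description precedes it below -/
import Mathlib

section
/- Let (V_0,…,V_{n−1}) be an n-gon with n ≥ 4 that is strictly convex. Then the 3(n−3)+2 signs a_2,…,a_{n−2}, b_2,…,b_{n−1}, c_2,…,c_{n−1} are all equal and nonzero, where a_i = sign Δ(V_{i−1},V_i,V_{i+1}), b_i = sign Δ(V_0,V_{i−1},V_i), c_i = sign Δ(V_0,V_1,V_i). -/
/-- Determinant of the 3×3 matrix with rows (1,x_P,y_P), (1,x_Q,y_Q), (1,x_R,y_R). -/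
def det3 (P Q R : ℝ × ℝ) : ℝ :=
  Matrix.det !![1, P.1, P.2; 1, Q.1, Q.2; 1, R.1, R.2]

/-- Dot product on ℝ². -/
def dot2 (a b : ℝ × ℝ) : ℝ := a.1 * b.1 + a.2 * b.2

/-- The points of `S` lie strictly to one side of the segment `[P,Q]`:
there is a line through `P` and `Q` (with normal `nv`) such that all of `S`
lies in one of the open half-planes it bounds. -/
def StrictSide (P Q : ℝ × ℝ) (S : Set (ℝ × ℝ)) : Prop :=
  ∃ nv : ℝ × ℝ, nv ≠ 0 ∧ dot2 nv (Q - P) = 0 ∧ ∀ A ∈ S, 0 < dot2 nv (A - P)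

/-- The points of `S` lie (non-strictly) to one side of the segment `[P,Q]`:
there is a line containing `[P,Q]` bounding a closed half-plane containing `S`. -/
def WeakSide (P Q : ℝ × ℝ) (S : Set (ℝ × ℝ)) : Prop :=
  ∃ nv : ℝ × ℝ, nv ≠ 0 ∧ dot2 nv (Q - P) = 0 ∧ ∀ A ∈ S, 0 ≤ dot2 nv (A - P)

/-- The successor index modulo `n`. -/
def nxt {n : ℕ} (i : Fin n) : Fin n :=
  ⟨(i.val + 1) % n, Nat.mod_lt _ (Nat.zero_lt_of_lt i.isLt)⟩

/-- The polygon `(V 0, …, V (n-1))` is convex: the union of its edges equals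
the boundary of the convex hull of its vertex set. -/
def IsConvexPolygon {n : ℕ} (V : Fin n → ℝ × ℝ) : Prop :=
  (⋃ i : Fin n, segment ℝ (V i) (V (nxt i))) = frontier (convexHull ℝ (Set.range V))

/-- Quasi-strict: no two adjacent vertices are collinear with any other vertex. -/
def QuasiStrict {n : ℕ} (V : Fin n → ℝ × ℝ) : Prop :=
  ∀ i j : Fin n, j ≠ i → j ≠ nxt i → ¬ Collinear ℝ ({V i, V (nxt i), V j} : Set (ℝ × ℝ))

/-- Strict: no three vertices with distinct indices are collinear. -/
def StrictPoly {n : ℕ} (V : Fin n → ℝ × ℝ) : Prop :=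
  ∀ i j k : Fin n, i ≠ j → i ≠ k → j ≠ k → ¬ Collinear ℝ ({V i, V j, V k} : Set (ℝ × ℝ))

/-- The vertices other than the endpoints of edge `i`. -/
def OtherVerts {n : ℕ} (V : Fin n → ℝ × ℝ) (i : Fin n) : Set (ℝ × ℝ) :=
  {P | ∃ j : Fin n, j ≠ i ∧ j ≠ nxt i ∧ P = V j}

/-- The polygon is strictly to one side of each of its edges. -/
def StrictlyToOneSide {n : ℕ} (V : Fin n → ℝ × ℝ) : Prop :=
  ∀ i : Fin n, StrictSide (V i) (V (nxt i)) (OtherVerts V i)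

/-- The polygon is (non-strictly) to one side of each of its edges. -/
def ToOneSide {n : ℕ} (V : Fin n → ℝ × ℝ) : Prop :=
  ∀ i : Fin n, WeakSide (V i) (V (nxt i)) (OtherVerts V i)

/-! A polygon with three non-collinear vertices has a convex hull with nonempty interior, so the
midpoint of each edge, lying on the frontier, has a supporting line, which must contain the whole
edge; strictness puts every other vertex strictly on one side of it. The supporting functional and
`det3 P Q ·` are affine functions vanishing on the same line, hence proportional, so the sign of
`det3 (V i) (V (i+1)) (V j)` does not depend on `j`. Evaluating the edges `i` and `i+1` at the
triple `V i, V (i+1), V (i+2)` and using the cyclic symmetry of `det3` shows it does not depend on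
`i` either; each of `a_i`, `b_i`, `c_i` is such a sign. -/

open Set

lemma Real.sign_eq_sign_of_mul_eq_mul {a b x y : ℝ} (ha : 0 < a) (hb : 0 < b)
    (h : a * x = b * y) : Real.sign x = Real.sign y := by
  rcases lt_trichotomy y 0 with hy | rfl | hy
  · rw [Real.sign_of_neg hy, Real.sign_of_neg (by nlinarith)]
  · rw [(mul_eq_zero.1 (h.trans (mul_zero b))).resolve_left ha.ne']
  · rw [Real.sign_of_pos hy, Real.sign_of_pos (by nlinarith)]

lemma Convex.exists_forall_le_of_notMem_interior {E : Type*} [AddCommGroup E] [Module ℝ E]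
    [TopologicalSpace E] [IsTopologicalAddGroup E] [ContinuousSMul ℝ E] {K : Set E}
    (hK : Convex ℝ K) {x₀ m : E} (hx₀ : x₀ ∈ interior K) (hm : m ∉ interior K) :
    ∃ f : StrongDual ℝ E, f x₀ < f m ∧ ∀ x ∈ K, f x ≤ f m := by
  obtain ⟨f, hf⟩ := geometric_hahn_banach_open_point hK.interior isOpen_interior hm
  refine ⟨f, hf x₀ hx₀, fun x hx => ?_⟩
  have hcl : closure (interior K) ⊆ {y | f y ≤ f m} :=
    closure_minimal (fun y hy => (hf y hy).le) (isClosed_le f.continuous continuous_const)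
  rw [hK.closure_interior_eq_closure_of_nonempty_interior ⟨x₀, hx₀⟩] at hcl
  exact hcl (subset_closure hx)

lemma det3_eq (P Q R : ℝ × ℝ) :
    det3 P Q R = (Q.1 - P.1) * (R.2 - P.2) - (Q.2 - P.2) * (R.1 - P.1) := by
  simp [det3, Matrix.det_fin_three]
  ring

lemma det3_rotate (P Q R : ℝ × ℝ) : det3 P Q R = det3 Q R P := by
  simp only [det3_eq]; ring

lemma collinear_of_det3_eq_zero {P Q R : ℝ × ℝ} (h : det3 P Q R = 0) :
    Collinear ℝ ({P, Q, R} : Set (ℝ × ℝ)) := by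
  rw [det3_eq] at h
  by_cases hPQ : P = Q
  · rw [hPQ, insert_eq_of_mem (mem_insert _ _)]
    exact collinear_pair ℝ Q R
  obtain ⟨r, hr⟩ : ∃ r : ℝ, R = r • (Q -ᵥ P) +ᵥ P := by
    simp only [Prod.ext_iff, vsub_eq_sub, vadd_eq_add, Prod.fst_add, Prod.snd_add,
      Prod.smul_fst, Prod.smul_snd, Prod.fst_sub, Prod.snd_sub, smul_eq_mul]
    by_cases h1 : Q.1 - P.1 = 0
    · have h2 : Q.2 - P.2 ≠ 0 := fun h2 => hPQ (Prod.ext (by linarith) (by linarith))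
      have hR : (Q.2 - P.2) * (R.1 - P.1) = 0 := by rw [h1] at h; linarith
      refine ⟨(R.2 - P.2) / (Q.2 - P.2), ?_, ?_⟩
      · rw [h1]; linarith [(mul_eq_zero.1 hR).resolve_left h2]
      · field_simp; ring
    · refine ⟨(R.1 - P.1) / (Q.1 - P.1), ?_, ?_⟩
      · field_simp; ring
      · field_simp; linear_combination h
  rw [pair_comm, insert_comm, hr]
  exact collinear_insert_of_mem_affineSpan_pair (smul_vsub_vadd_mem_affineSpan_pair r P Q)

lemma apply_eq_dot2 {F : Type*} [FunLike F (ℝ × ℝ) ℝ] [LinearMapClass F ℝ (ℝ × ℝ) ℝ] (f : F)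
    (x : ℝ × ℝ) : f x = dot2 (f (1, 0), f (0, 1)) x := by
  conv_lhs => rw [show x = x.1 • ((1 : ℝ), (0 : ℝ)) + x.2 • ((0 : ℝ), (1 : ℝ)) by ext <;> simp]
  simp only [map_add, map_smul, smul_eq_mul, dot2]
  ring

-- Two affine functions vanishing on the line `PQ` are proportional.
lemma dot2_mul_det3_eq {P Q nv : ℝ × ℝ} (h : dot2 nv (Q - P) = 0) (A X : ℝ × ℝ) :
    dot2 nv (A - P) * det3 P Q X = dot2 nv (X - P) * det3 P Q A := by
  simp only [dot2, det3_eq, Prod.fst_sub, Prod.snd_sub] at h ⊢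
  linear_combination ((A.1 - P.1) * (X.2 - P.2) - (A.2 - P.2) * (X.1 - P.1)) * h

lemma StrictSide.sign_det3_eq {P Q : ℝ × ℝ} {S : Set (ℝ × ℝ)} (h : StrictSide P Q S)
    {A X : ℝ × ℝ} (hA : A ∈ S) (hX : X ∈ S) :
    Real.sign (det3 P Q A) = Real.sign (det3 P Q X) := by
  obtain ⟨nv, -, hperp, hpos⟩ := h
  exact Real.sign_eq_sign_of_mul_eq_mul (hpos X hX) (hpos A hA) (dot2_mul_det3_eq hperp X A)

section Polygon

variable {n : ℕ}

lemma val_nxt_of_lt {i : Fin n} (h : i.val + 1 < n) : (nxt i).val = i.val + 1 :=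
  Nat.mod_eq_of_lt h

lemma val_nxt (i : Fin n) : (nxt i).val = if i.val + 1 = n then 0 else i.val + 1 := by
  split_ifs with h
  · exact (congrArg (· % n) h).trans (Nat.mod_self n)
  · exact val_nxt_of_lt (by omega)

lemma nxt_ne_self (hn : 2 ≤ n) (i : Fin n) : nxt i ≠ i := by
  have := i.isLt
  refine Fin.ne_of_val_ne ?_
  rw [val_nxt]
  split_ifs <;> omega

lemma nxt_nxt_ne_self (hn : 3 ≤ n) (i : Fin n) : nxt (nxt i) ≠ i := by
  have := i.isLt
  refine Fin.ne_of_val_ne ?_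
  rw [val_nxt, val_nxt]
  split_ifs <;> omega

lemma nxt_pred (i : Fin n) (hi : 0 < i.val) (h : i.val - 1 < n) : nxt ⟨i.val - 1, h⟩ = i :=
  Fin.ext <| (val_nxt_of_lt (by simp only; omega)).trans (by simp only; omega)

lemma eq_of_apply_nxt_eq {α : Type*} {f : Fin n → α} (h : ∀ i, f (nxt i) = f i) (i j : Fin n) :
    f i = f j := by
  have hn : 0 < n := i.pos
  suffices ∀ k (hk : k < n), f ⟨k, hk⟩ = f ⟨0, hn⟩ from (this i i.isLt).trans (this j j.isLt).symm
  intro k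
  induction k with
  | zero => intro _; rfl
  | succ k ih =>
    intro hk
    rw [← ih (by omega), ← h ⟨k, by omega⟩]
    exact congrArg f (Fin.ext (val_nxt_of_lt (i := ⟨k, by omega⟩) hk).symm)

variable {V : Fin n → ℝ × ℝ}

lemma StrictPoly.det3_ne_zero (hs : StrictPoly V) {i j k : Fin n}
    (hij : i ≠ j) (hik : i ≠ k) (hjk : j ≠ k) : det3 (V i) (V j) (V k) ≠ 0 :=
  fun h => hs i j k hij hik hjk (collinear_of_det3_eq_zero h)

lemma StrictPoly.affineSpan_range_eq_top (hn : 3 ≤ n) (hs : StrictPoly V) :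
    affineSpan ℝ (range V) = ⊤ := by
  have hind : AffineIndependent ℝ ![V ⟨0, by omega⟩, V ⟨1, by omega⟩, V ⟨2, by omega⟩] :=
    affineIndependent_iff_not_collinear_set.2 <| hs _ _ _ (by simp) (by simp) (by simp)
  have htop := hind.affineSpan_eq_top_iff_card_eq_finrank_add_one.2 (by simp)
  refine eq_top_iff.2 (htop.symm.le.trans (affineSpan_mono ℝ ?_))
  rintro _ ⟨k, rfl⟩
  fin_cases k <;> exact mem_range_self _

theorem StrictPoly.strictlyToOneSide (hn : 3 ≤ n) (hs : StrictPoly V) (hc : IsConvexPolygon V) :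
    StrictlyToOneSide V := by
  intro i
  set K := convexHull ℝ (range V)
  obtain ⟨x₀, hx₀⟩ : (interior K).Nonempty :=
    interior_convexHull_nonempty_iff_affineSpan_eq_top.2 (hs.affineSpan_range_eq_top hn)
  set m := midpoint ℝ (V i) (V (nxt i))
  have hm : m ∉ interior K := by
    have hfr : m ∈ frontier K := hc ▸ mem_iUnion.2 ⟨i, midpoint_mem_segment _ _⟩
    exact hfr.2
  obtain ⟨f, hfx₀, hfK⟩ := (convex_convexHull ℝ _).exists_forall_le_of_notMem_interior hx₀ hm
  have hfV : ∀ j, f (V j) ≤ f m := fun j => hfK _ (subset_convexHull ℝ _ (mem_range_self j))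
  have hfm : f m = 2⁻¹ * (f (V i) + f (V (nxt i))) := by
    simp only [m, midpoint_eq_smul_add, map_smul, map_add, invOf_eq_inv, smul_eq_mul]
  have hfi : f (V i) = f m := by linarith [hfV i, hfV (nxt i)]
  set nv : ℝ × ℝ := -(f (1, 0), f (0, 1))
  have hnv : ∀ A, dot2 nv (A - V i) = f (V i) - f A := by
    intro A
    rw [apply_eq_dot2 f (V i), apply_eq_dot2 f A]
    simp only [nv, dot2, Prod.fst_neg, Prod.snd_neg, Prod.fst_sub, Prod.snd_sub]
    ring
  have hperp : dot2 nv (V (nxt i) - V i) = 0 := by rw [hnv]; linarith [hfV (nxt i)]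
  refine ⟨nv, fun h0 => ?_, hperp, ?_⟩
  · have := hnv x₀
    simp only [h0, dot2, Prod.fst_zero, Prod.snd_zero, zero_mul, add_zero] at this
    linarith
  · rintro _ ⟨j, hji, hjn, rfl⟩
    have hdet : det3 (V i) (V (nxt i)) (V j) ≠ 0 :=
      hs.det3_ne_zero (nxt_ne_self (by omega) i).symm hji.symm hjn.symm
    -- compare with the interior point `x₀`, which lies strictly below the supporting line
    have hne : dot2 nv (V j - V i) ≠ 0 := by
      intro h0
      have key := dot2_mul_det3_eq hperp (V j) x₀
      rw [h0, zero_mul, hnv] at key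
      exact mul_ne_zero (by linarith) hdet key.symm
    exact lt_of_le_of_ne (by rw [hnv]; linarith [hfV j]) hne.symm

theorem StrictlyToOneSide.exists_sign_det3_eq (hn : 3 ≤ n) (hs : StrictPoly V)
    (hV : StrictlyToOneSide V) :
    ∃ s ≠ 0, ∀ i j : Fin n, j ≠ i → j ≠ nxt i → Real.sign (det3 (V i) (V (nxt i)) (V j)) = s := by
  set ε : Fin n → ℝ := fun i => Real.sign (det3 (V i) (V (nxt i)) (V (nxt (nxt i))))
  have hε : ∀ i j, j ≠ i → j ≠ nxt i → Real.sign (det3 (V i) (V (nxt i)) (V j)) = ε i :=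
    fun i j hji hjn => (hV i).sign_det3_eq ⟨j, hji, hjn, rfl⟩
      ⟨nxt (nxt i), nxt_nxt_ne_self hn i, nxt_ne_self (by omega) _, rfl⟩
  have hεnxt : ∀ i, ε (nxt i) = ε i := fun i =>
    calc ε (nxt i) = Real.sign (det3 (V (nxt i)) (V (nxt (nxt i))) (V i)) :=
          (hε _ _ (nxt_ne_self (by omega) i).symm (nxt_nxt_ne_self hn i).symm).symm
      _ = ε i := by rw [← det3_rotate]
  refine ⟨ε ⟨0, by omega⟩, fun h0 => ?_,
    fun i j hji hjn => (hε i j hji hjn).trans (eq_of_apply_nxt_eq hεnxt i _)⟩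
  exact hs.det3_ne_zero (nxt_ne_self (by omega) _).symm (nxt_nxt_ne_self hn _).symm
    (nxt_ne_self (by omega) _).symm (Real.sign_eq_zero_iff.1 h0)

end Polygon

/-- Pinelis, Remark 2: for a strictly convex n-gon with n ≥ 4, the signs
`a_2,…,a_{n−2}, b_2,…,b_{n−1}, c_2,…,c_{n−1}` are all equal and nonzero. -/
theorem stmt_8 (n : ℕ) (hn : 4 ≤ n) (V : Fin n → ℝ × ℝ)
    (h : StrictPoly V ∧ IsConvexPolygon V) :
    ∃ s : ℝ, s ≠ 0 ∧
      (∀ i : Fin n, 2 ≤ i.val → i.val ≤ n - 2 →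
        Real.sign (det3 (V ⟨i.val - 1, lt_of_le_of_lt (Nat.sub_le _ _) i.isLt⟩)
          (V i) (V (nxt i))) = s) ∧
      (∀ i : Fin n, 2 ≤ i.val → i.val ≤ n - 1 →
        Real.sign (det3 (V ⟨0, by omega⟩)
          (V ⟨i.val - 1, lt_of_le_of_lt (Nat.sub_le _ _) i.isLt⟩) (V i)) = s ∧
        Real.sign (det3 (V ⟨0, by omega⟩) (V ⟨1, by omega⟩) (V i)) = s) := by
  obtain ⟨hs, hc⟩ := h
  obtain ⟨s, hs0, hsign⟩ :=
    (hs.strictlyToOneSide (by omega) hc).exists_sign_det3_eq (by omega) hs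
  have hedge : ∀ i j k : Fin n, nxt i = j → k ≠ i → k ≠ j →
      Real.sign (det3 (V i) (V j) (V k)) = s := by
    rintro i _ k rfl
    exact hsign i k
  refine ⟨s, hs0, fun i hi hin => ?_, fun i hi hin => ⟨?_, ?_⟩⟩
  · refine hedge _ _ _ (nxt_pred i (by omega) _) (Fin.ne_of_val_ne ?_) (nxt_ne_self (by omega) i)
    rw [val_nxt_of_lt (by omega)]
    simp only
    omega
  · rw [det3_rotate]
    exact hedge _ _ _ (nxt_pred i (by omega) _) (Fin.ne_of_val_ne (by simp only; omega))
      (Fin.ne_of_val_ne (by simp only; omega))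
  · exact hedge _ _ _ (Fin.ext (val_nxt_of_lt (by simp only; omega)))
      (Fin.ne_of_val_ne (by simp only; omega)) (Fin.ne_of_val_ne (by simp only; omega))
end

section
/- If a polygon P = (V_0,…,V_{n−1}) is quasi-strictly convex, then for every index m, the (n−1)-gon obtained by deleting vertex V_m is quasi-strictly convex. -/
/-! A convex quasi-strict polygon with at least three vertices is supported along every edge:
for each `i` some linear functional `g i` is constant on the edge `[V i, V (i + 1)]` and strictly
larger at all other vertices (take a supporting line at the midpoint of the edge; it is strict by
quasi-strictness). Conversely, such functionals make a polygon convex and quasi-strict, since every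
point strictly above all edge lines lies in the convex hull, so boundary points of the hull lie on
edges. Deleting `V m` keeps all edges except the two at `V m`, which are replaced by the diagonal
`[V (m - 1), V (m + 1)]`. Every other vertex lies strictly on the far side of this diagonal from
`V m`: otherwise it would lie in the triangle `V (m - 1), V m, V (m + 1)`, which is on the wrong
side of the edge ending at that vertex. -/

open Set

theorem exists_ne_zero_apply_eq (P Q : ℝ × ℝ) :
    ∃ h : (ℝ × ℝ) →L[ℝ] ℝ, h ≠ 0 ∧ h Q = h P := by
  have hlt : (ℝ ∙ (Q - P)) < ⊤ := by
    refine lt_top_iff_ne_top.2 fun htop => ?_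
    have h1 := finrank_span_le_card (R := ℝ) ({Q - P} : Set (ℝ × ℝ))
    rw [htop, finrank_top] at h1
    simp at h1
  obtain ⟨h, hne, hker⟩ := Submodule.exists_le_ker_of_lt_top _ hlt
  refine ⟨LinearMap.toContinuousLinearMap h, by simpa using hne, ?_⟩
  simpa [sub_eq_zero] using hker (Submodule.mem_span_singleton_self (Q - P))

theorem collinear_of_apply_eq {h : (ℝ × ℝ) →L[ℝ] ℝ} (hh : h ≠ 0) {A B C : ℝ × ℝ}
    (hB : h B = h A) (hC : h C = h A) : Collinear ℝ {A, B, C} := by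
  have hker : Module.finrank ℝ (LinearMap.ker (h : (ℝ × ℝ) →ₗ[ℝ] ℝ)) = 1 := by
    have := Module.Dual.finrank_ker_add_one_of_ne_zero (f := (h : (ℝ × ℝ) →ₗ[ℝ] ℝ))
      (fun h0 => hh (ContinuousLinearMap.coe_injective h0))
    simp only [Module.finrank_prod, Module.finrank_self] at this
    omega
  rw [collinear_iff_finrank_le_one, ← hker]
  refine Submodule.finrank_mono ?_
  rw [vectorSpan_def, Submodule.span_le]
  rintro _ ⟨x, hx, y, hy, rfl⟩
  have hv : ∀ z ∈ ({A, B, C} : Set (ℝ × ℝ)), h z = h A := by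
    simp only [mem_insert_iff, mem_singleton_iff]
    rintro z (rfl | rfl | rfl) <;> first | rfl | assumption
  simp [hv x hx, hv y hy]

theorem not_collinear_of_apply_ne (h : (ℝ × ℝ) →L[ℝ] ℝ) {A B C : ℝ × ℝ} (hAB : A ≠ B)
    (hB : h B = h A) (hC : h C ≠ h A) : ¬ Collinear ℝ {A, B, C} := fun hcol => by
  obtain ⟨r, rfl⟩ := mem_affineSpan_pair_iff_exists_lineMap_eq.1
    (hcol.mem_affineSpan_of_mem_of_ne (p₃ := C) (by simp) (by simp) (by simp) hAB)
  simp [AffineMap.lineMap_apply, hB] at hC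

theorem eq_smul_add_smul_of_dual {f₁ f₂ : (ℝ × ℝ) →L[ℝ] ℝ} {u v : ℝ × ℝ} (hu : f₁ u ≠ 0)
    (hv : f₂ v ≠ 0) (hfv : f₁ v = 0) (hfu : f₂ u = 0) (w : ℝ × ℝ) :
    w = (f₁ w / f₁ u) • u + (f₂ w / f₂ v) • v := by
  have hli : LinearIndependent ℝ ![u, v] := by
    refine LinearIndependent.pair_iff.2 fun s t hst => ?_
    have h₁ := congrArg f₁ hst
    have h₂ := congrArg f₂ hst
    simp only [map_add, map_smul, hfv, hfu, smul_eq_mul, mul_zero, add_zero, zero_add,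
      map_zero, mul_eq_zero] at h₁ h₂
    tauto
  obtain ⟨c, rfl⟩ := (Submodule.mem_span_range_iff_exists_fun ℝ).1
    ((hli.span_eq_top_of_card_eq_finrank' (by simp)).symm ▸ Submodule.mem_top : w ∈ _)
  simp [Fin.sum_univ_two, hfv, hfu, hu, hv]

theorem exists_forall_le_of_notMem_interior {E : Type*} [NormedAddCommGroup E]
    [NormedSpace ℝ E] {K : Set E} {x : E} (hK : Convex ℝ K) (hint : (interior K).Nonempty)
    (hx : x ∉ interior K) : ∃ φ : E →L[ℝ] ℝ, φ ≠ 0 ∧ ∀ y ∈ K, φ y ≤ φ x := by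
  obtain ⟨φ, hφ⟩ := geometric_hahn_banach_open_point hK.interior isOpen_interior hx
  obtain ⟨z, hz⟩ := hint
  refine ⟨φ, fun h0 => by simpa [h0] using hφ z hz, fun y hy => ?_⟩
  have hcl : closure (interior K) ⊆ {y | φ y ≤ φ x} :=
    closure_minimal (fun y hy => (hφ y hy).le) (isClosed_le φ.continuous continuous_const)
  exact hcl ((hK.closure_interior_eq_closure_of_nonempty_interior ⟨z, hz⟩).symm ▸
    subset_closure hy)

theorem notMem_interior_of_isMinOn {E : Type*} [NormedAddCommGroup E] [NormedSpace ℝ E]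
    {K : Set E} {x : E} {φ : E →L[ℝ] ℝ} (hφ : φ ≠ 0) (hmin : IsMinOn φ K x) :
    x ∉ interior K := fun hx =>
  hφ ((hmin.isLocalMin (mem_interior_iff_mem_nhds.1 hx)).hasFDerivAt_eq_zero φ.hasFDerivAt)

theorem interior_convexHull_nonempty_of_not_collinear {s : Set (ℝ × ℝ)} {A B C : ℝ × ℝ}
    (hA : A ∈ s) (hB : B ∈ s) (hC : C ∈ s) (h : ¬ Collinear ℝ {A, B, C}) :
    (interior (convexHull ℝ s)).Nonempty := by
  rw [interior_convexHull_nonempty_iff_affineSpan_eq_top, eq_top_iff]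
  have hind := affineIndependent_iff_not_collinear_set.2 h
  rw [← (hind.affineSpan_eq_top_iff_card_eq_finrank_add_one).2 (by simp)]
  refine affineSpan_mono ℝ ?_
  rintro _ ⟨i, rfl⟩
  fin_cases i <;> assumption

theorem interior_convexHull_eq_empty_of_collinear {s : Set (ℝ × ℝ)} (h : Collinear ℝ s) :
    interior (convexHull ℝ s) = ∅ := by
  rw [← not_nonempty_iff_eq_empty, interior_convexHull_nonempty_iff_affineSpan_eq_top]
  intro htop
  have h1 := (collinear_iff_finrank_le_one (k := ℝ)).1 h
  rw [← direction_affineSpan, htop, AffineSubspace.direction_top, finrank_top] at h1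
  simp at h1

theorem nxt_val {k : ℕ} (i : Fin k) :
    (nxt i : ℕ) = if (i : ℕ) + 1 = k then 0 else (i : ℕ) + 1 := by
  have := i.isLt
  split_ifs with h
  · simp [nxt, h]
  · exact Nat.mod_eq_of_lt (by omega)

def prv {k : ℕ} (i : Fin k) : Fin k :=
  ⟨((i : ℕ) + k - 1) % k, Nat.mod_lt _ (Nat.zero_lt_of_lt i.isLt)⟩

theorem prv_val {k : ℕ} (i : Fin k) :
    (prv i : ℕ) = if (i : ℕ) = 0 then k - 1 else (i : ℕ) - 1 := by
  have := i.isLt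
  simp only [prv]
  split_ifs with h
  · rw [h, zero_add]; exact Nat.mod_eq_of_lt (by omega)
  · rw [show (i : ℕ) + k - 1 = (i - 1) + k by omega, Nat.add_mod_right]
    exact Nat.mod_eq_of_lt (by omega)

theorem nxt_prv {k : ℕ} (i : Fin k) : nxt (prv i) = i := by
  have := i.isLt
  rw [Fin.ext_iff, nxt_val, prv_val]
  split_ifs <;> omega

theorem nxt_injective {k : ℕ} : Function.Injective (nxt : Fin k → Fin k) := by
  intro a b h
  have := a.isLt; have := b.isLt
  rw [Fin.ext_iff, nxt_val, nxt_val] at h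
  ext; split_ifs at h <;> omega

theorem nxt_ne {k : ℕ} (hk : 2 ≤ k) (i : Fin k) : nxt i ≠ i := by
  have := i.isLt
  rw [ne_eq, Fin.ext_iff, nxt_val]
  split_ifs <;> omega

theorem prv_ne {k : ℕ} (hk : 2 ≤ k) (i : Fin k) : prv i ≠ i := by
  have := i.isLt
  rw [ne_eq, Fin.ext_iff, prv_val]
  split_ifs <;> omega

theorem nxt_ne_prv {k : ℕ} (hk : 3 ≤ k) (i : Fin k) : nxt i ≠ prv i := by
  have := i.isLt
  rw [ne_eq, Fin.ext_iff, nxt_val, prv_val]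
  split_ifs <;> omega

theorem val_succAbove {n : ℕ} (m : Fin (n + 1)) (i : Fin n) :
    (m.succAbove i : ℕ) = if (i : ℕ) < m then (i : ℕ) else (i : ℕ) + 1 := by
  split_ifs with h
  · rw [Fin.succAbove_of_castSucc_lt m i h, Fin.val_castSucc]
  · rw [Fin.succAbove_of_le_castSucc m i (by simpa [Fin.le_def] using h), Fin.val_succ]

theorem succAbove_nxt {n : ℕ} (m : Fin (n + 1)) (i : Fin n) :
    m.succAbove (nxt i) =
      if nxt (m.succAbove i) = m then nxt m else nxt (m.succAbove i) := by
  have e1 := val_succAbove m i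
  have e2 := val_succAbove m (nxt i)
  have e3 := nxt_val i
  have e4 := nxt_val (m.succAbove i)
  have e5 := nxt_val m
  have := i.isLt; have := m.isLt
  split_ifs with h <;> rw [Fin.ext_iff] at h ⊢ <;>
    split_ifs at e1 e2 e3 e4 e5 <;> omega

theorem nxt_nxt_ne {k : ℕ} (hk : 3 ≤ k) (i : Fin k) : nxt (nxt i) ≠ i := by
  have := i.isLt
  rw [ne_eq, Fin.ext_iff, nxt_val, nxt_val]
  split_ifs <;> omega

theorem quasiStrict_of_le_two {k : ℕ} (hk : k ≤ 2) (W : Fin k → ℝ × ℝ) : QuasiStrict W := by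
  intro i j hji hjn
  have := i.isLt; have := j.isLt
  rw [ne_eq, Fin.ext_iff] at hji hjn
  rw [nxt_val] at hjn
  split_ifs at hjn <;> omega

theorem isConvexPolygon_of_le_two {k : ℕ} (hk : k ≤ 2) (W : Fin k → ℝ × ℝ) :
    IsConvexPolygon W := by
  have hcol : Collinear ℝ (range W) ∧
      (⋃ i, segment ℝ (W i) (W (nxt i))) = convexHull ℝ (range W) := by
    interval_cases k
    · simp [range_eq_empty, collinear_empty]
    · simp [Fin.fin_one_eq_zero, range_unique, collinear_singleton]
    · have hr : range W = {W 0, W 1} := by ext; simp [Fin.exists_fin_two, eq_comm]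
      have h0 : nxt (0 : Fin 2) = 1 := rfl
      have h1 : nxt (1 : Fin 2) = 0 := rfl
      refine ⟨hr ▸ collinear_pair ℝ _ _, ?_⟩
      ext x
      simp [Fin.exists_fin_two, h0, h1, hr, convexHull_pair, segment_symm ℝ (W 1)]
  rw [IsConvexPolygon, ((finite_range W).isClosed_convexHull ℝ).frontier_eq,
    interior_convexHull_eq_empty_of_collinear hcol.1, sdiff_empty, hcol.2]

/-- `StrictlyToOneSide`, with the normals of the edges replaced by linear functionals. -/
def IsEdgeSupport {k : ℕ} (W : Fin k → ℝ × ℝ) (g : Fin k → (ℝ × ℝ) →L[ℝ] ℝ) : Prop :=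
  ∀ i, g i (W (nxt i)) = g i (W i) ∧ ∀ j, j ≠ i → j ≠ nxt i → g i (W i) < g i (W j)

theorem exists_isEdgeSupport {k : ℕ} {W : Fin k → ℝ × ℝ} (hk : 3 ≤ k)
    (hconv : IsConvexPolygon W) (hqs : QuasiStrict W) : ∃ g, IsEdgeSupport W g := by
  set K := convexHull ℝ (range W)
  have hint : (interior K).Nonempty := by
    let i₀ : Fin k := ⟨0, by omega⟩
    exact interior_convexHull_nonempty_of_not_collinear (mem_range_self i₀)
      (mem_range_self (nxt i₀)) (mem_range_self (nxt (nxt i₀)))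
      (hqs _ _ (nxt_nxt_ne hk i₀) (nxt_ne (by omega) (nxt i₀)))
  have hvert : ∀ j, W j ∈ K := fun j => subset_convexHull ℝ _ (mem_range_self j)
  suffices ∀ i, ∃ f : (ℝ × ℝ) →L[ℝ] ℝ,
      f (W (nxt i)) = f (W i) ∧ ∀ j, j ≠ i → j ≠ nxt i → f (W i) < f (W j) by
    choose g hg using this
    exact ⟨g, hg⟩
  intro i
  set x := midpoint ℝ (W i) (W (nxt i))
  have hx : x ∈ frontier K := hconv ▸ mem_iUnion.2 ⟨i, midpoint_mem_segment _ _⟩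
  obtain ⟨φ, hφ0, hφ⟩ := exists_forall_le_of_notMem_interior (convex_convexHull ℝ _) hint hx.2
  have hφx : φ x = (φ (W i) + φ (W (nxt i))) / 2 := by
    simp only [x, midpoint_eq_smul_add, invOf_eq_inv, smul_add, map_add, map_smul, smul_eq_mul]
    ring
  have hφi := hφ _ (hvert i)
  have hφn := hφ _ (hvert (nxt i))
  have hφi' : φ (W i) = φ x := by linarith
  refine ⟨-φ, by simp only [neg_apply, neg_inj]; linarith, fun j hji hjn => ?_⟩
  -- a vertex at the level of the edge would be collinear with it
  refine neg_lt_neg_iff.2 <| hφi' ▸ (hφ _ (hvert j)).lt_of_ne fun hj => hqs i j hji hjn ?_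
  exact collinear_of_apply_eq hφ0 (by linarith) (by linarith)

namespace IsEdgeSupport

variable {k : ℕ} {W : Fin k → ℝ × ℝ} {g : Fin k → (ℝ × ℝ) →L[ℝ] ℝ}

theorem apply_nxt (hg : IsEdgeSupport W g) (i : Fin k) : g i (W (nxt i)) = g i (W i) :=
  (hg i).1

theorem apply_lt (hg : IsEdgeSupport W g) {i j : Fin k} (hji : j ≠ i) (hjn : j ≠ nxt i) :
    g i (W i) < g i (W j) :=
  (hg i).2 j hji hjn

theorem apply_prv (hg : IsEdgeSupport W g) (i : Fin k) :
    g (prv i) (W i) = g (prv i) (W (prv i)) := by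
  simpa only [nxt_prv] using hg.apply_nxt (prv i)

theorem apply_le (hg : IsEdgeSupport W g) (i j : Fin k) : g i (W i) ≤ g i (W j) := by
  by_cases hji : j = i
  · rw [hji]
  by_cases hjn : j = nxt i
  · rw [hjn, hg.apply_nxt]
  exact (hg.apply_lt hji hjn).le

theorem apply_le_of_mem_convexHull (hg : IsEdgeSupport W g) (i : Fin k) {x : ℝ × ℝ}
    (hx : x ∈ convexHull ℝ (range W)) : g i (W i) ≤ g i x :=
  convexHull_min (t := {w | g i (W i) ≤ g i w}) (range_subset_iff.2 (hg.apply_le i))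
    (convex_halfSpace_ge (g i).toLinearMap.isLinear _) hx

theorem apply_lt_apply_prv (hk : 3 ≤ k) (hg : IsEdgeSupport W g) (i : Fin k) :
    g i (W i) < g i (W (prv i)) :=
  hg.apply_lt (prv_ne (by omega) i) (nxt_ne_prv hk i).symm

theorem apply_prv_lt_apply_nxt (hk : 3 ≤ k) (hg : IsEdgeSupport W g) (i : Fin k) :
    g (prv i) (W (prv i)) < g (prv i) (W (nxt i)) :=
  hg.apply_lt (nxt_ne_prv hk i) (by rw [nxt_prv]; exact nxt_ne (by omega) i)

theorem ne_zero (hk : 3 ≤ k) (hg : IsEdgeSupport W g) (i : Fin k) : g i ≠ 0 := fun h0 => by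
  simpa [h0] using hg.apply_lt_apply_prv hk i

theorem vertex_nxt_ne (hk : 3 ≤ k) (hg : IsEdgeSupport W g) (i : Fin k) :
    W (nxt i) ≠ W i := fun h => by
  simpa [h, hg.apply_prv] using hg.apply_prv_lt_apply_nxt hk i

theorem quasiStrict (hk : 3 ≤ k) (hg : IsEdgeSupport W g) : QuasiStrict W :=
  fun i _ hji hjn => not_collinear_of_apply_ne (g i) (hg.vertex_nxt_ne hk i).symm
    (hg.apply_nxt i) (hg.apply_lt hji hjn).ne'

theorem eq_corner (hk : 3 ≤ k) (hg : IsEdgeSupport W g) (p : Fin k) (y : ℝ × ℝ) :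
    y = W p + ((g p y - g p (W p)) / (g p (W (prv p)) - g p (W p))) • (W (prv p) - W p)
      + ((g (prv p) y - g (prv p) (W (prv p))) /
          (g (prv p) (W (nxt p)) - g (prv p) (W (prv p)))) • (W (nxt p) - W p) := by
  have hu := hg.apply_lt_apply_prv hk p
  have hv := hg.apply_prv_lt_apply_nxt hk p
  have := eq_smul_add_smul_of_dual (f₁ := g p) (f₂ := g (prv p)) (u := W (prv p) - W p)
    (v := W (nxt p) - W p) (by simp; linarith) (by simp [hg.apply_prv]; linarith)
    (by simp [hg.apply_nxt]) (by simp [hg.apply_prv]) (y - W p)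
  simp only [map_sub, hg.apply_prv] at this
  rw [add_assoc, ← this, add_sub_cancel]

theorem exists_corner_pos (hk : 3 ≤ k) (hg : IsEdgeSupport W g) (p : Fin k) {y : ℝ × ℝ}
    (hp : g p (W p) < g p y) (hprv : g (prv p) (W (prv p)) < g (prv p) y) :
    ∃ s t : ℝ, 0 < s ∧ 0 < t ∧ y = W p + s • (W (prv p) - W p) + t • (W (nxt p) - W p) :=
  ⟨_, _, div_pos (sub_pos.2 hp) (sub_pos.2 (hg.apply_lt_apply_prv hk p)),
    div_pos (sub_pos.2 hprv) (sub_pos.2 (hg.apply_prv_lt_apply_nxt hk p)), hg.eq_corner hk p y⟩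

theorem mem_segment_of_apply_eq (hk : 3 ≤ k) (hg : IsEdgeSupport W g) {i : Fin k}
    {x : ℝ × ℝ} (hx : x ∈ convexHull ℝ (range W)) (hxi : g i x = g i (W i)) :
    x ∈ segment ℝ (W i) (W (nxt i)) := by
  have hc := hg.eq_corner hk i x
  rw [hxi, sub_self, zero_div, zero_smul, add_zero] at hc
  set t := (g (prv i) x - g (prv i) (W (prv i))) /
    (g (prv i) (W (nxt i)) - g (prv i) (W (prv i)))
  have ht0 : 0 ≤ t := div_nonneg (sub_nonneg.2 (hg.apply_le_of_mem_convexHull _ hx))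
    (sub_nonneg.2 (hg.apply_le _ _))
  have ht1 : t ≤ 1 := by
    have hlt := hg.apply_lt (i := nxt i) (nxt_ne (by omega) i).symm (nxt_nxt_ne hk i).symm
    have hle := hg.apply_le_of_mem_convexHull (nxt i) hx
    rw [hc] at hle
    simp only [map_add, map_smul, map_sub, smul_eq_mul] at hle
    nlinarith
  rw [segment_eq_image']
  exact ⟨t, ⟨ht0, ht1⟩, hc.symm⟩

theorem mem_convexHull_of_lt (hk : 3 ≤ k) (hg : IsEdgeSupport W g) {y : ℝ × ℝ}
    (hy : ∀ i, g i (W i) < g i y) : y ∈ convexHull ℝ (range W) := by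
  by_contra hyK
  obtain ⟨φ, u, hφK, hφy⟩ := geometric_hahn_banach_closed_point (convex_convexHull ℝ _)
    ((finite_range W).isClosed_convexHull ℝ) hyK
  have : Nonempty (Fin k) := ⟨⟨0, by omega⟩⟩
  -- at a vertex maximising `φ`, the cone spanned by the two edges contains `y`
  obtain ⟨p, hp⟩ := Finite.exists_max (φ ∘ W)
  obtain ⟨s, t, hs, ht, hyp⟩ := hg.exists_corner_pos hk p (hy p) (hy (prv p))
  have hφp := hφK _ (subset_convexHull ℝ _ (mem_range_self p))
  have hφprv : φ (W (prv p)) ≤ φ (W p) := hp (prv p)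
  have hφnxt : φ (W (nxt p)) ≤ φ (W p) := hp (nxt p)
  rw [hyp] at hφy
  simp only [map_add, map_smul, map_sub, smul_eq_mul] at hφy
  nlinarith

theorem isConvexPolygon (hk : 3 ≤ k) (hg : IsEdgeSupport W g) : IsConvexPolygon W := by
  set K := convexHull ℝ (range W)
  have hvert : ∀ j, W j ∈ K := fun j => subset_convexHull ℝ _ (mem_range_self j)
  rw [IsConvexPolygon, ((finite_range W).isClosed_convexHull ℝ).frontier_eq]
  refine subset_antisymm (iUnion_subset fun i x hx => ⟨?_, ?_⟩) fun x ⟨hxK, hxi⟩ => ?_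
  · exact (convex_convexHull ℝ _).segment_subset (hvert i) (hvert (nxt i)) hx
  · have hgx : g i x = g i (W i) :=
      (convex_hyperplane (g i).toLinearMap.isLinear _).segment_subset rfl (hg.apply_nxt i) hx
    refine notMem_interior_of_isMinOn (hg.ne_zero hk i) fun y hy => ?_
    rw [mem_ofPred_eq, hgx]
    exact hg.apply_le_of_mem_convexHull i hy
  by_contra hx
  have hlt : ∀ i, g i (W i) < g i x := fun i =>
    (hg.apply_le_of_mem_convexHull i hxK).lt_of_ne fun h =>
      hx (mem_iUnion.2 ⟨i, hg.mem_segment_of_apply_eq hk hxK h.symm⟩)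
  have hopen : IsOpen {y | ∀ i, g i (W i) < g i y} := by
    rw [ofPred_forall]
    exact isOpen_iInter_of_finite fun i => isOpen_lt continuous_const (g i).continuous
  exact hxi (interior_maximal (fun y hy => hg.mem_convexHull_of_lt hk hy) hopen hlt)

theorem vertex_ne_corner_triangle (hg : IsEdgeSupport W g) {m j : Fin k} (hjp : j ≠ prv m)
    (hjm : j ≠ m) (hjn : j ≠ nxt m) {s t : ℝ} (hs : 0 < s) (ht : 0 ≤ t) (hst : s + t ≤ 1) :
    W j ≠ W m + s • (W (prv m) - W m) + t • (W (nxt m) - W m) := fun hj => by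
  -- the edge ending at `W j` has the whole triangle strictly on one side
  have hm := hg.apply_lt (i := prv j) (j := m)
    (fun h => hjn (by rw [← nxt_prv j, ← h])) (Ne.symm (by rwa [nxt_prv]))
  have hp := hg.apply_lt (i := prv j) (j := prv m)
    (fun h => hjm (by rw [← nxt_prv j, ← h, nxt_prv])) (by rw [nxt_prv]; exact Ne.symm hjp)
  have hq := hg.apply_le (prv j) (nxt m)
  have hj' := congrArg (g (prv j)) hj
  rw [hg.apply_prv] at hj'
  simp only [map_add, map_smul, map_sub, smul_eq_mul] at hj'
  nlinarith

theorem exists_diagonal (hk : 3 ≤ k) (hg : IsEdgeSupport W g) (m : Fin k) :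
    ∃ h : (ℝ × ℝ) →L[ℝ] ℝ, h (W (nxt m)) = h (W (prv m)) ∧
      ∀ j, j ≠ prv m → j ≠ m → j ≠ nxt m → h (W (prv m)) < h (W j) := by
  obtain ⟨h, hh, hq⟩ := exists_ne_zero_apply_eq (W (prv m)) (W (nxt m))
  have hm : h (W m) ≠ h (W (prv m)) := fun hm => by
    refine not_collinear_of_apply_ne (g (prv m)) ?_ (hg.apply_prv m)
      (hg.apply_prv_lt_apply_nxt hk m).ne'
      (collinear_of_apply_eq hh hm hq)
    simpa only [nxt_prv] using (hg.vertex_nxt_ne hk (prv m)).symm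
  obtain ⟨h, hq, hm⟩ : ∃ h : (ℝ × ℝ) →L[ℝ] ℝ,
      h (W (nxt m)) = h (W (prv m)) ∧ h (W m) < h (W (prv m)) := by
    rcases hm.lt_or_gt with hlt | hgt
    · exact ⟨h, hq, hlt⟩
    · exact ⟨-h, by simp [hq], by simpa using hgt⟩
  refine ⟨h, hq, fun j hjp hjm hjn => not_le.1 fun hle => ?_⟩
  obtain ⟨s, t, hs, ht, hj⟩ := hg.exists_corner_pos hk m (hg.apply_lt hjm hjn)
    (hg.apply_lt hjp (by rwa [nxt_prv]))
  have hst : s + t ≤ 1 := by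
    have hj' := congrArg h hj
    simp only [map_add, map_smul, map_sub, smul_eq_mul, hq] at hj'
    nlinarith
  exact hg.vertex_ne_corner_triangle hjp hjm hjn hs ht.le hst hj

theorem exists_comp_succAbove {n : ℕ} {V : Fin (n + 1) → ℝ × ℝ}
    {g : Fin (n + 1) → (ℝ × ℝ) →L[ℝ] ℝ} (hn : 3 ≤ n) (hg : IsEdgeSupport V g)
    (m : Fin (n + 1)) : ∃ g', IsEdgeSupport (V ∘ m.succAbove) g' := by
  classical
  obtain ⟨h, hq, hj⟩ := hg.exists_diagonal (by omega) m
  refine ⟨fun i => if nxt (m.succAbove i) = m then h else g (m.succAbove i), fun i => ?_⟩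
  have hsucc := succAbove_nxt m i
  have hinj := Fin.succAbove_right_injective (p := m)
  simp only [Function.comp_apply]
  split_ifs at hsucc ⊢ with hi
  · have hp : m.succAbove i = prv m := nxt_injective (by rw [hi, nxt_prv])
    rw [hsucc, hp]
    exact ⟨hq, fun j hji hjn => hj _ (hp ▸ hinj.ne hji) (Fin.succAbove_ne m j)
      (hsucc ▸ hinj.ne hjn)⟩
  · rw [hsucc]
    exact ⟨hg.apply_nxt _, fun j hji hjn => hg.apply_lt (hinj.ne hji) (hsucc ▸ hinj.ne hjn)⟩

end IsEdgeSupport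

/-- Pinelis, Lemma 6: deleting any vertex of a quasi-strictly convex polygon
yields a quasi-strictly convex polygon. -/
theorem stmt_11 (n : ℕ) (V : Fin (n + 1) → ℝ × ℝ)
    (h : IsConvexPolygon V ∧ QuasiStrict V) (m : Fin (n + 1)) :
    IsConvexPolygon (V ∘ m.succAbove) ∧ QuasiStrict (V ∘ m.succAbove) := by
  obtain ⟨hconv, hqs⟩ := h
  rcases le_or_gt n 2 with hn | hn
  · exact ⟨isConvexPolygon_of_le_two hn _, quasiStrict_of_le_two hn _⟩
  obtain ⟨g, hg⟩ := exists_isEdgeSupport (by omega) hconv hqs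
  obtain ⟨g', hg'⟩ := hg.exists_comp_succAbove hn m
  exact ⟨hg'.isConvexPolygon hn, hg'.quasiStrict hn⟩
end
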